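/- Let d, n, m be positive integers, κ > 0, ξ ≥ 0, i = (i₁, i₂, i₃) ∈ [d]³, and s = (s₁, s₂, s₃) ∈ {−1, 1}³; write ψ = ψ_{i,s}. Let D = (x₁, …, xₙ) with each x_t ∈ {−1, 1}^d and suppose ψ(x_t) = 1 for all t ∈ [n]. Let D' = (κx₁, …, κxₙ). Let D̃' = (x̃'₁, …, x̃'ₘ) be any tuple of points of ℝ^d. Let C^0 = {0}, C^ψ = {2κ·s₁·𝟏_{i₁}, 2κ·s₂·𝟏_{i₂}, 2κ·s₃·𝟏_{i₃}}, and for each i ∈ [d] let C^i = {+dκ·𝟏_i, −dκ·𝟏_i}. If |cost_{C,2}(D̃') − cost_{C,2}(D')| ≤ ξ for every C ∈ {C^0, C^ψ, C^1, …, C^d}, then (1/m) ∑_{t=1}^m ψ(sgn(x̃'_t)) ≥ 1 − ξ/(2κ²) − √ξ/κ. -/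

import Mathlib

/-!
Write `y_t` for the points of `D̃'`. The query `C⁰` pins the mean of `‖y_t‖²` to within `ξ` of
`dκ²`; adding the `d` axis queries `Cⁱ` then shows that the mean squared distance from `y_t` to the
cube `κ{-1,1}ᵈ` is at most `ξ`. For `C^ψ`, every point of `D'` has a centre at squared distance
exactly `dκ²` (the one of a satisfied literal), whereas every centre is at squared distance at least
`‖y‖² + 4κ² - 4κ²ψ(sgn y) - 4κ·dist(y, cube)` from `y`: the literal `s_j y_{i_j}` equals
`s_j sgn(y_{i_j}) · |y_{i_j}|`, and the ±1 value `s_j sgn(y_{i_j})` is at most `ψ(sgn y)`.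
Averaging, with the mean distance bounded by the root of the mean squared distance
(Cauchy–Schwarz), gives the bound.
-/

open scoped BigOperators

/-- `sgn v = 1` if `v ≥ 0` and `-1` if `v < 0`. -/
noncomputable def sgn (v : ℝ) : ℝ := if 0 ≤ v then 1 else -1

/-- Coordinatewise sign of a vector in Euclidean space. -/
noncomputable def sgnVecE {d : ℕ} (y : EuclideanSpace ℝ (Fin d)) : EuclideanSpace ℝ (Fin d) :=
  WithLp.toLp 2 (fun i => sgn (y i))

/-- The `k`-means cost query in the Euclidean metric: `cost_{C,2}(x) = min_{c ∈ C} ‖x - c‖₂²`. -/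
noncomputable def costE {d k : ℕ} (C : Fin k → EuclideanSpace ℝ (Fin d))
    (x : EuclideanSpace ℝ (Fin d)) : ℝ :=
  ⨅ j : Fin k, ‖x - C j‖ ^ 2

/-- The Euclidean cost of a dataset: `cost_{C,2}(D) = (1/n) ∑_t cost_{C,2}(x_t)`. -/
noncomputable def costEData {d k n : ℕ} (C : Fin k → EuclideanSpace ℝ (Fin d))
    (D : Fin n → EuclideanSpace ℝ (Fin d)) : ℝ :=
  (∑ t, costE C (D t)) / n

/-- The 3-literal disjunction query `ψ_{i,s}`. -/
noncomputable def psi {d : ℕ} (idx : Fin 3 → Fin d) (s : Fin 3 → ℝ) (x : Fin d → ℝ) : ℝ :=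
  1 - (1 / 4) * ((1 - s 0 * x (idx 0)) * (1 - s 1 * x (idx 1)) * (1 - s 2 * x (idx 2)))

open Finset

variable {d : ℕ}

lemma norm_sub_smul_single_sq (y : EuclideanSpace ℝ (Fin d)) (i : Fin d) (c : ℝ) :
    ‖y - c • EuclideanSpace.single i (1 : ℝ)‖ ^ 2 = ‖y‖ ^ 2 - 2 * c * y i + c ^ 2 := by
  rw [norm_sub_sq_real, inner_smul_right, EuclideanSpace.inner_single_right, norm_smul,
    PiLp.norm_single]
  simp only [conj_trivial, norm_one, Real.norm_eq_abs, mul_one, one_mul, sq_abs]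
  ring

lemma norm_smul_sq_of_forall_eq_one_or_neg_one {x : EuclideanSpace ℝ (Fin d)}
    (hx : ∀ i, x i = 1 ∨ x i = -1) (κ : ℝ) : ‖κ • x‖ ^ 2 = d * κ ^ 2 := by
  have hsq : ∀ i, x i ^ 2 = 1 := fun i => by rcases hx i with h | h <;> simp [h]
  rw [norm_smul, mul_pow, EuclideanSpace.real_norm_sq_eq]
  simp [hsq, sq_abs, mul_comm]

lemma expect_fin_eq_sum_div {n : ℕ} (f : Fin n → ℝ) : 𝔼 t, f t = (∑ t, f t) / n := by
  simp [Fintype.expect_eq_sum_div_card]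

section Cost

variable {k : ℕ} (C : Fin k → EuclideanSpace ℝ (Fin d))

lemma costE_le (x : EuclideanSpace ℝ (Fin d)) (j : Fin k) : costE C x ≤ ‖x - C j‖ ^ 2 :=
  ciInf_le ⟨0, by rintro _ ⟨j, rfl⟩; positivity⟩ j

lemma le_costE [NeZero k] {x : EuclideanSpace ℝ (Fin d)} {c : ℝ}
    (h : ∀ j, c ≤ ‖x - C j‖ ^ 2) : c ≤ costE C x :=
  le_ciInf h

lemma costEData_eq_expect {n : ℕ} (D : Fin n → EuclideanSpace ℝ (Fin d)) :
    costEData C D = 𝔼 t, costE C (D t) :=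
  (expect_fin_eq_sum_div _).symm

end Cost

lemma costE_zero (x : EuclideanSpace ℝ (Fin d)) :
    costE (fun _ : Fin 1 => (0 : EuclideanSpace ℝ (Fin d))) x = ‖x‖ ^ 2 := by
  simp [costE]

lemma costE_pair_single {c : ℝ} (hc : 0 ≤ c) (i : Fin d) (x : EuclideanSpace ℝ (Fin d)) :
    costE ![c • EuclideanSpace.single i (1 : ℝ), (-c) • EuclideanSpace.single i (1 : ℝ)] x =
      ‖x‖ ^ 2 - 2 * c * |x i| + c ^ 2 := by
  have hval : ∀ j, ‖x - ![c • EuclideanSpace.single i (1 : ℝ),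
      (-c) • EuclideanSpace.single i (1 : ℝ)] j‖ ^ 2 =
        ‖x‖ ^ 2 - 2 * (![c, -c] j) * x i + c ^ 2 := by
    intro j
    fin_cases j <;> simp only [Fin.zero_eta, Fin.mk_one, Matrix.cons_val_zero, Matrix.cons_val_one,
      norm_sub_smul_single_sq, neg_sq]
  refine le_antisymm ?_ (le_costE _ fun j => ?_)
  · rcases le_total 0 (x i) with h | h
    · refine (costE_le _ x 0).trans_eq ?_
      rw [hval, abs_of_nonneg h]
      rfl
    · refine (costE_le _ x 1).trans_eq ?_
      rw [hval, abs_of_nonpos h]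
      simp
  · rw [hval]
    have := mul_le_mul_of_nonneg_left (le_abs_self (x i)) hc
    have := mul_le_mul_of_nonneg_left (neg_le_abs (x i)) hc
    fin_cases j <;> simp <;> linarith

lemma sgn_mul_abs (v : ℝ) : sgn v * |v| = v := by
  unfold sgn
  split_ifs with h
  · simp [abs_of_nonneg h]
  · simp [abs_of_neg (not_le.mp h)]

lemma sgn_eq_one_or_neg_one (v : ℝ) : sgn v = 1 ∨ sgn v = -1 := by
  unfold sgn
  split_ifs <;> simp

section Psi

variable {idx : Fin 3 → Fin d} {s : Fin 3 → ℝ} {z : Fin d → ℝ}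

lemma exists_literal_eq_one_of_psi_eq_one (h : psi idx s z = 1) : ∃ j, s j * z (idx j) = 1 := by
  have hprod : (1 - s 0 * z (idx 0)) * (1 - s 1 * z (idx 1)) * (1 - s 2 * z (idx 2)) = 0 := by
    unfold psi at h
    linarith
  rcases mul_eq_zero.mp hprod with h01 | h2
  · rcases mul_eq_zero.mp h01 with h0 | h1
    · exact ⟨0, by linarith⟩
    · exact ⟨1, by linarith⟩
  · exact ⟨2, by linarith⟩

lemma literal_le_psi (hz : ∀ j, s j * z (idx j) = 1 ∨ s j * z (idx j) = -1) (j : Fin 3) :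
    s j * z (idx j) ≤ psi idx s z := by
  unfold psi
  rcases hz 0 with h0 | h0 <;> rcases hz 1 with h1 | h1 <;> rcases hz 2 with h2 | h2 <;>
    fin_cases j <;> simp [h0, h1, h2] <;> norm_num

end Psi

/-- For `κ ≥ 0`, the squared Euclidean distance from `y` to the scaled cube `κ • {-1, 1}ᵈ`. -/
noncomputable def sqDistCube (κ : ℝ) (y : EuclideanSpace ℝ (Fin d)) : ℝ := ∑ i, (|y i| - κ) ^ 2

lemma abs_abs_sub_le_sqrt_sqDistCube (κ : ℝ) (y : EuclideanSpace ℝ (Fin d)) (i : Fin d) :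
    |(|y i| - κ)| ≤ √(sqDistCube κ y) := by
  rw [← Real.sqrt_sq_eq_abs]
  exact Real.sqrt_le_sqrt
    (single_le_sum (f := fun i => (|y i| - κ) ^ 2) (fun _ _ => sq_nonneg _) (mem_univ i))

section Clause

variable {idx : Fin 3 → Fin d} {s : Fin 3 → ℝ}

lemma literal_mul_le (hs : ∀ j, s j = 1 ∨ s j = -1) {κ : ℝ} (hκ : 0 ≤ κ)
    (y : EuclideanSpace ℝ (Fin d)) (j : Fin 3) :
    s j * y (idx j) ≤ κ * psi idx s (sgnVecE y) + √(sqDistCube κ y) := by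
  set ℓ := s j * sgn (y (idx j)) with hℓdef
  have hℓ : ℓ = 1 ∨ ℓ = -1 := by
    rcases hs j with h | h <;> rcases sgn_eq_one_or_neg_one (y (idx j)) with h' | h' <;>
      simp [ℓ, h, h']
  have hℓψ : ℓ ≤ psi idx s (sgnVecE y) :=
    literal_le_psi (z := sgnVecE y) (fun k => by
      rcases hs k with h | h <;> rcases sgn_eq_one_or_neg_one (y (idx k)) with h' | h' <;>
        simp [sgnVecE, h, h']) j
  have hsplit : s j * y (idx j) = ℓ * κ + ℓ * (|y (idx j)| - κ) := by
    conv_lhs => rw [← sgn_mul_abs (y (idx j))]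
    rw [hℓdef]
    ring
  have hdev : ℓ * (|y (idx j)| - κ) ≤ |(|y (idx j)| - κ)| := by
    rcases hℓ with h | h <;> rw [h]
    · rw [one_mul]
      exact le_abs_self _
    · rw [neg_one_mul]
      exact neg_le_abs _
  have := abs_abs_sub_le_sqrt_sqDistCube κ y (idx j)
  have := mul_le_mul_of_nonneg_left hℓψ hκ
  linarith

lemma costE_clause_smul_le (hs : ∀ j, s j = 1 ∨ s j = -1) (κ : ℝ) {x : EuclideanSpace ℝ (Fin d)}
    (hx : ∀ i, x i = 1 ∨ x i = -1) (hψ : psi idx s x = 1) :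
    costE (fun j : Fin 3 => (2 * κ * s j) • EuclideanSpace.single (idx j) (1 : ℝ)) (κ • x) ≤
      d * κ ^ 2 := by
  obtain ⟨j, hj⟩ := exists_literal_eq_one_of_psi_eq_one hψ
  refine (costE_le _ _ j).trans_eq ?_
  have hs2 : s j ^ 2 = 1 := by rcases hs j with h | h <;> simp [h]
  rw [norm_sub_smul_single_sq, norm_smul_sq_of_forall_eq_one_or_neg_one hx, PiLp.smul_apply,
    smul_eq_mul]
  linear_combination (4 * κ ^ 2) * hs2 - (4 * κ ^ 2) * hj

lemma le_costE_clause (hs : ∀ j, s j = 1 ∨ s j = -1) {κ : ℝ} (hκ : 0 ≤ κ)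
    (y : EuclideanSpace ℝ (Fin d)) :
    ‖y‖ ^ 2 + 4 * κ ^ 2 - 4 * κ ^ 2 * psi idx s (sgnVecE y) - 4 * κ * √(sqDistCube κ y) ≤
      costE (fun j : Fin 3 => (2 * κ * s j) • EuclideanSpace.single (idx j) (1 : ℝ)) y := by
  refine le_costE _ fun j => ?_
  have hs2 : s j ^ 2 = 1 := by rcases hs j with h | h <;> simp [h]
  have := mul_le_mul_of_nonneg_left (literal_mul_le (idx := idx) hs hκ y j)
    (by positivity : 0 ≤ 4 * κ)
  rw [norm_sub_smul_single_sq]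
  linear_combination this - 4 * κ ^ 2 * hs2

end Clause

section Axes

variable {κ : ℝ}

lemma costE_axis_smul (hκ : 0 ≤ κ) {x : EuclideanSpace ℝ (Fin d)} (hx : ∀ i, x i = 1 ∨ x i = -1)
    (i : Fin d) :
    costE ![(d * κ) • EuclideanSpace.single i (1 : ℝ), (-(d * κ)) • EuclideanSpace.single i (1 : ℝ)]
      (κ • x) = κ ^ 2 * d * (d - 1) := by
  have habs : |(κ • x) i| = κ := by
    rcases hx i with h | h <;> simp [h, abs_of_nonneg hκ]
  rw [costE_pair_single (by positivity), norm_smul_sq_of_forall_eq_one_or_neg_one hx, habs]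
  ring

-- The `i`-th summand is the `Cⁱ` cost of `y` minus the `Cⁱ` cost of any point of `κ{-1,1}ᵈ`.
lemma mul_sqDistCube_eq_sum (y : EuclideanSpace ℝ (Fin d)) :
    d * sqDistCube κ y =
      ∑ i, (‖y‖ ^ 2 - 2 * (d * κ) * |y i| + (d * κ) ^ 2 - κ ^ 2 * d * (d - 1)) := by
  simp only [sqDistCube, EuclideanSpace.real_norm_sq_eq, sub_sq, sq_abs, sum_sub_distrib,
    sum_add_distrib, ← mul_sum, ← sum_mul, sum_const, card_univ, Fintype.card_fin, nsmul_eq_mul]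
  ring

lemma expect_sqDistCube_le {m : ℕ} [NeZero m] {ξ : ℝ} (hd : 0 < d) (hκ : 0 ≤ κ)
    (y : Fin m → EuclideanSpace ℝ (Fin d))
    (h : ∀ i : Fin d, costEData ![(d * κ) • EuclideanSpace.single i (1 : ℝ),
      (-(d * κ)) • EuclideanSpace.single i (1 : ℝ)] y ≤ κ ^ 2 * d * (d - 1) + ξ) :
    𝔼 t, sqDistCube κ (y t) ≤ ξ := by
  have hd' : (0 : ℝ) < d := Nat.cast_pos.mpr hd
  refine le_of_mul_le_mul_left ?_ hd'
  calc (d : ℝ) * 𝔼 t, sqDistCube κ (y t)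
      = ∑ i : Fin d, (costEData ![(d * κ) • EuclideanSpace.single i (1 : ℝ),
          (-(d * κ)) • EuclideanSpace.single i (1 : ℝ)] y - κ ^ 2 * d * (d - 1)) := by
        simp only [mul_expect, mul_sqDistCube_eq_sum, costEData_eq_expect,
          costE_pair_single (by positivity : (0 : ℝ) ≤ d * κ)]
        rw [expect_sum_comm]
        simp only [expect_sub_distrib, Fintype.expect_const]
    _ ≤ ∑ _i : Fin d, ξ := sum_le_sum fun i _ => by linarith [h i]
    _ = d * ξ := by simp

end Axes

lemma expect_sqrt_le_sqrt_expect {ι : Type*} [Fintype ι] [Nonempty ι] (f : ι → ℝ)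
    (hf : ∀ t, 0 ≤ f t) :
    𝔼 t, √(f t) ≤ √(𝔼 t, f t) := by
  have := expect_mul_sq_le_sq_mul_sq univ (fun _ => (1 : ℝ)) (fun t => √(f t))
  simp only [one_mul, one_pow, Fintype.expect_const, Real.sq_sqrt (hf _)] at this
  exact Real.le_sqrt_of_sq_le this

theorem stmt_12_general (d n m : ℕ) (hd : 0 < d) (hn : 0 < n) (hm : 0 < m)
    (κ ξ : ℝ) (hκ : 0 < κ)
    (idx : Fin 3 → Fin d) (s : Fin 3 → ℝ) (hs : ∀ j, s j = 1 ∨ s j = -1)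
    (x : Fin n → EuclideanSpace ℝ (Fin d)) (hx : ∀ t i, x t i = 1 ∨ x t i = -1)
    (hψ : ∀ t, psi idx s (x t) = 1)
    (Dtil : Fin m → EuclideanSpace ℝ (Fin d))
    (hC0 : |costEData (fun _ : Fin 1 => (0 : EuclideanSpace ℝ (Fin d))) Dtil -
        costEData (fun _ : Fin 1 => (0 : EuclideanSpace ℝ (Fin d))) (fun t => κ • x t)| ≤ ξ)
    (hCψ : |costEData (fun j : Fin 3 => (2 * κ * s j) • EuclideanSpace.single (idx j) (1 : ℝ)) Dtil -
        costEData (fun j : Fin 3 => (2 * κ * s j) • EuclideanSpace.single (idx j) (1 : ℝ))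
          (fun t => κ • x t)| ≤ ξ)
    (hCi : ∀ i : Fin d,
      |costEData ![(d * κ) • EuclideanSpace.single i (1 : ℝ),
                   (-(d * κ)) • EuclideanSpace.single i (1 : ℝ)] Dtil -
        costEData ![(d * κ) • EuclideanSpace.single i (1 : ℝ),
                    (-(d * κ)) • EuclideanSpace.single i (1 : ℝ)] (fun t => κ • x t)| ≤ ξ) :
    (∑ t, psi idx s (sgnVecE (Dtil t))) / m ≥ 1 - ξ / (2 * κ ^ 2) - Real.sqrt ξ / κ := by
  have : NeZero n := ⟨hn.ne'⟩
  have : NeZero m := ⟨hm.ne'⟩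
  simp only [costEData_eq_expect] at hC0 hCψ
  have hA : d * κ ^ 2 - ξ ≤ 𝔼 t, ‖Dtil t‖ ^ 2 := by
    simp only [costE_zero, norm_smul_sq_of_forall_eq_one_or_neg_one (hx _),
      Fintype.expect_const] at hC0
    linarith [(abs_le.mp hC0).1]
  have hclause : 𝔼 t, (‖Dtil t‖ ^ 2 + 4 * κ ^ 2 - 4 * κ ^ 2 * psi idx s (sgnVecE (Dtil t))
      - 4 * κ * √(sqDistCube κ (Dtil t))) ≤ d * κ ^ 2 + ξ := by
    have hD' := expect_le univ_nonempty fun t _ => costE_clause_smul_le hs κ (hx t) (hψ t)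
    have hDtil := expect_le_expect (s := univ) fun t _ =>
      le_costE_clause (idx := idx) hs hκ.le (Dtil t)
    linarith [(abs_le.mp hCψ).2]
  have hZ : 𝔼 t, sqDistCube κ (Dtil t) ≤ ξ := by
    refine expect_sqDistCube_le hd hκ.le Dtil fun i => ?_
    have hD' : costEData ![(d * κ) • EuclideanSpace.single i (1 : ℝ),
        (-(d * κ)) • EuclideanSpace.single i (1 : ℝ)] (fun t => κ • x t) = κ ^ 2 * d * (d - 1) := by
      simp only [costEData_eq_expect, costE_axis_smul hκ.le (hx _), Fintype.expect_const]
    linarith [(abs_le.mp (hCi i)).2]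
  have hR : 𝔼 t, √(sqDistCube κ (Dtil t)) ≤ √ξ :=
    (expect_sqrt_le_sqrt_expect _ fun _ => sum_nonneg fun _ _ => sq_nonneg _).trans
      (Real.sqrt_le_sqrt hZ)
  simp only [expect_sub_distrib, expect_add_distrib, ← mul_expect, Fintype.expect_const] at hclause
  have hbound : 1 - ξ / (2 * κ ^ 2) - √ξ / κ = (4 * κ ^ 2 - 2 * ξ - 4 * κ * √ξ) / (4 * κ ^ 2) := by
    field_simp
    ring
  rw [← expect_fin_eq_sum_div, ge_iff_le, hbound, div_le_iff₀ (by positivity)]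
  linarith [mul_le_mul_of_nonneg_left hR (by positivity : 0 ≤ 4 * κ)]

theorem stmt_12 (d n m : ℕ) (hd : 0 < d) (hn : 0 < n) (hm : 0 < m)
    (κ ξ : ℝ) (hκ : 0 < κ) (hξ : 0 ≤ ξ)
    (idx : Fin 3 → Fin d) (s : Fin 3 → ℝ) (hs : ∀ j, s j = 1 ∨ s j = -1)
    (x : Fin n → EuclideanSpace ℝ (Fin d)) (hx : ∀ t i, x t i = 1 ∨ x t i = -1)
    (hψ : ∀ t, psi idx s (x t) = 1)
    (Dtil : Fin m → EuclideanSpace ℝ (Fin d))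
    (hC0 : |costEData (fun _ : Fin 1 => (0 : EuclideanSpace ℝ (Fin d))) Dtil -
        costEData (fun _ : Fin 1 => (0 : EuclideanSpace ℝ (Fin d))) (fun t => κ • x t)| ≤ ξ)
    (hCψ : |costEData (fun j : Fin 3 => (2 * κ * s j) • EuclideanSpace.single (idx j) (1 : ℝ)) Dtil -
        costEData (fun j : Fin 3 => (2 * κ * s j) • EuclideanSpace.single (idx j) (1 : ℝ))
          (fun t => κ • x t)| ≤ ξ)
    (hCi : ∀ i : Fin d,
      |costEData ![(d * κ) • EuclideanSpace.single i (1 : ℝ),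
                   (-(d * κ)) • EuclideanSpace.single i (1 : ℝ)] Dtil -
        costEData ![(d * κ) • EuclideanSpace.single i (1 : ℝ),
                    (-(d * κ)) • EuclideanSpace.single i (1 : ℝ)] (fun t => κ • x t)| ≤ ξ) :
    (∑ t, psi idx s (sgnVecE (Dtil t))) / m ≥ 1 - ξ / (2 * κ ^ 2) - Real.sqrt ξ / κ :=
  stmt_12_general d n m hd hn hm κ ξ hκ idx s hs x hx hψ Dtil hC0 hCψ hCi
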